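/- Let f and g be nonsingular quadratic forms with rational coefficients in m variables that are linearly equivalent over ℚ, i.e., there exists T ∈ GL(m,ℚ) with f(Tx) = g(x) for all x. Then the groups O(f,ℤ) and O(g,ℤ) are abstractly commensurable: they contain isomorphic subgroups of finite index. -/

import Mathlib

/-!
Conjugation by `T` carries `O(F, ℚ)` onto `O(G, ℚ)` and `GL(m, ℤ)` onto `T⁻¹ GL(m, ℤ) T`, so
`T⁻¹ O(F, ℤ) T` and `O(G, ℤ)` are the intersections of `O(G, ℚ)` with `T⁻¹ GL(m, ℤ) T` and
`GL(m, ℤ)`. These two are commensurable: if `d` clears the denominators of `T` and `T⁻¹`, then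
`T⁻¹ (1 + d² X) T = 1 + (d T⁻¹) X (d T)` is integral, so the principal congruence subgroup of
level `d²` is conjugated into `GL(m, ℤ)`; the same holds with `T` and `T⁻¹` exchanged.
-/

namespace Paper

open Matrix

/-- Value at `x` of the quadratic form with Gram matrix `Q`. -/
def qeval {m : ℕ} {R : Type*} [CommRing R] (Q : Matrix (Fin m) (Fin m) R) (x : Fin m → R) : R :=
  x ⬝ᵥ (Q *ᵥ x)

/-- The polar bilinear form `B(x,y) = (f(x+y) - f(x) - f(y))/2` of the quadratic form
with Gram matrix `Q`. -/
def qpolar {m : ℕ} {K : Type*} [Field K] (Q : Matrix (Fin m) (Fin m) K) (x y : Fin m → K) : K :=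
  (qeval Q (x + y) - qeval Q x - qeval Q y) / 2

/-- A real quadratic form (given by its Gram matrix `Q`) has signature `(r,s)`:
`r + s = m` and it is linearly equivalent over `ℝ` to
`x_1^2 + ... + x_r^2 - x_{r+1}^2 - ... - x_m^2`. -/
def RealSignature {m : ℕ} (Q : Matrix (Fin m) (Fin m) ℝ) (r s : ℕ) : Prop :=
  r + s = m ∧ ∃ T : Matrix (Fin m) (Fin m) ℝ, T.det ≠ 0 ∧
    ∀ x : Fin m → ℝ, qeval Q (T *ᵥ x) = ∑ i : Fin m, (if (i : ℕ) < r then (x i)^2 else -(x i)^2)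

/-- A rational quadratic form has signature `(r,s)` if it does as a real quadratic form. -/
def HasSignature {m : ℕ} (Q : Matrix (Fin m) (Fin m) ℚ) (r s : ℕ) : Prop :=
  RealSignature (Q.map (Rat.cast : ℚ → ℝ)) r s

/-- The rational quadratic form `F` (in `n` variables) represents the rational quadratic
form `G` (in `k` variables): after a linear change of coordinates over `ℚ`,
`F(x_1,...,x_n) = G(x_1,...,x_k) + H(x_{k+1},...,x_n)` for some rational quadratic form `H`. -/
def Represents {n k : ℕ} (F : Matrix (Fin n) (Fin n) ℚ) (G : Matrix (Fin k) (Fin k) ℚ) : Prop :=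
  ∃ (m : ℕ) (hm : n = k + m) (H : Matrix (Fin m) (Fin m) ℚ) (T : Matrix (Fin n) (Fin n) ℚ),
    T.det ≠ 0 ∧ ∀ (x : Fin k → ℚ) (y : Fin m → ℚ),
      qeval F (T *ᵥ (Fin.append x y ∘ Fin.cast hm)) = qeval G x + qeval H y

/-- The group `O(f, A)` of matrices in `GL(m, A)` preserving the quadratic form `f`
(with Gram matrix `Q` over `K ⊇ A`): those `M` with `f(Mx) = f(x)` for all `x`. -/
def ortho {m : ℕ} (A : Type*) [CommRing A] {K : Type*} [Field K] [Algebra A K]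
    (Q : Matrix (Fin m) (Fin m) K) : Subgroup (GL (Fin m) A) where
  carrier := { M | ∀ x : Fin m → K,
      qeval Q (((M : Matrix (Fin m) (Fin m) A).map (algebraMap A K)) *ᵥ x) = qeval Q x }
  one_mem' := by
    intro x
    have h1 : ((1 : GL (Fin m) A) : Matrix (Fin m) (Fin m) A).map (algebraMap A K) = 1 := by
      simp [Matrix.map_one]
    rw [h1, Matrix.one_mulVec]
  mul_mem' := by
    intro a b ha hb x
    have h : ((a * b : GL (Fin m) A) : Matrix (Fin m) (Fin m) A).map (algebraMap A K)
        = ((a : Matrix (Fin m) (Fin m) A).map (algebraMap A K)) *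
          ((b : Matrix (Fin m) (Fin m) A).map (algebraMap A K)) := by
      rw [Units.val_mul, Matrix.map_mul]
    rw [h, ← Matrix.mulVec_mulVec, ha, hb]
  inv_mem' := by
    intro a ha x
    set M := ((a : Matrix (Fin m) (Fin m) A).map (algebraMap A K)) with hM
    set N := (((a⁻¹ : GL (Fin m) A) : Matrix (Fin m) (Fin m) A).map (algebraMap A K)) with hN
    have hMN : M * N = 1 := by
      rw [hM, hN, ← Matrix.map_mul]
      have : (a : Matrix (Fin m) (Fin m) A) * ((a⁻¹ : GL (Fin m) A) : Matrix (Fin m) (Fin m) A)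
          = 1 := a.mul_inv
      rw [this]
      simp [Matrix.map_one]
    have ha' : ∀ y : Fin m → K, qeval Q (M *ᵥ y) = qeval Q y := ha
    calc qeval Q (N *ᵥ x) = qeval Q (M *ᵥ (N *ᵥ x)) := (ha' (N *ᵥ x)).symm
      _ = qeval Q ((M * N) *ᵥ x) := by rw [Matrix.mulVec_mulVec]
      _ = qeval Q x := by rw [hMN, Matrix.one_mulVec]

/-- `O(f, ℤ)` for a rational quadratic form `f` with Gram matrix `Q`. -/
abbrev OZ {m : ℕ} (Q : Matrix (Fin m) (Fin m) ℚ) : Subgroup (GL (Fin m) ℤ) := ortho ℤ Q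

/-- A group is finitely presented: it is a quotient of a finitely generated free group by
the normal closure of a finite set of relators. -/
def IsFinitelyPresented (G : Type*) [Group G] : Prop :=
  ∃ (n : ℕ) (rels : Set (FreeGroup (Fin n))), rels.Finite ∧ Nonempty (PresentedGroup rels ≃* G)

/-- A group is coherent if each of its finitely generated subgroups is finitely presented. -/
def IsCoherent (G : Type*) [Group G] : Prop :=
  ∀ H : Subgroup G, Group.FG H → IsFinitelyPresented H

/-- Two groups are abstractly commensurable if they contain isomorphic
subgroups of finite index. -/
def AbstractlyCommensurable (G H : Type*) [Group G] [Group H] : Prop :=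
  ∃ (G' : Subgroup G) (H' : Subgroup H), G'.FiniteIndex ∧ H'.FiniteIndex ∧ Nonempty (G' ≃* H')

/-- The form `q₃ = -x₀² + x₁² + x₂² + x₃²`. -/
def q3 : Matrix (Fin 4) (Fin 4) ℚ := Matrix.diagonal ![-1, 1, 1, 1]

open Matrix Subgroup ConjAct
open scoped Pointwise

section Commensurability

variable {G H G₁ H₁ : Type*} [Group G] [Group H] [Group G₁] [Group H₁]

theorem AbstractlyCommensurable.of_mulEquiv (e : G ≃* G₁) (f : H ≃* H₁)
    (h : AbstractlyCommensurable G₁ H₁) : AbstractlyCommensurable G H := by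
  obtain ⟨G', H', hG', hH', ⟨φ⟩⟩ := h
  refine ⟨G'.map (e.symm : G₁ →* G), H'.map (f.symm : H₁ →* H), ⟨?_⟩, ⟨?_⟩,
    ⟨((e.symm.subgroupMap G').symm.trans φ).trans (f.symm.subgroupMap H')⟩⟩
  · rw [index_map_equiv]; exact hG'.index_ne_zero
  · rw [index_map_equiv]; exact hH'.index_ne_zero

theorem AbstractlyCommensurable.of_commensurable {K L : Subgroup G}
    (h : Commensurable K L) : AbstractlyCommensurable K L :=
  ⟨(K ⊓ L).subgroupOf K, (K ⊓ L).subgroupOf L,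
    ⟨by rw [← relIndex, inf_relIndex_left]; exact h.2⟩,
    ⟨by rw [← relIndex, inf_relIndex_right]; exact h.1⟩,
    ⟨(subgroupOfEquivOfLe inf_le_left).trans (subgroupOfEquivOfLe inf_le_right).symm⟩⟩

theorem _root_.Subgroup.Commensurable.inf_right {K L : Subgroup G} (h : Commensurable K L)
    (M : Subgroup G) : Commensurable (K ⊓ M) (L ⊓ M) := by
  have key : ∀ {K L : Subgroup G}, K.relIndex L ≠ 0 → (K ⊓ M).relIndex (L ⊓ M) ≠ 0 :=
    fun hKL => relIndex_inf_ne_zero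
      (relIndex_ne_zero_trans hKL (by rw [relIndex_eq_one.2 inf_le_left]; exact one_ne_zero))
      (by rw [relIndex_eq_one.2 inf_le_right]; exact one_ne_zero)
  exact ⟨key h.1, key h.2⟩

theorem _root_.Subgroup.Commensurable.of_relIndex_smul_ne_zero {K : Subgroup G}
    (h : ∀ g : ConjAct G, (g • K).relIndex K ≠ 0) (g : ConjAct G) :
    Commensurable (g • K) K :=
  ⟨h g, by rw [← relIndex_pointwise_smul g⁻¹, inv_smul_smul]; exact h g⁻¹⟩

end Commensurability

theorem _root_.Subring.mul_one_add_sq_zsmul_mul_mem {R : Type*} [Ring R] (S : Subring R)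
    {a b x : R} {d : ℤ} (hab : a * b = 1) (ha : d • a ∈ S) (hb : d • b ∈ S) (hx : x ∈ S) :
    a * (1 + d ^ 2 • x) * b ∈ S := by
  have h : a * (1 + d ^ 2 • x) * b = 1 + d • a * x * d • b := by
    simp only [mul_add, add_mul, mul_one, hab, smul_mul_assoc, mul_smul_comm, smul_smul, sq]
  rw [h]
  exact S.add_mem S.one_mem (S.mul_mem (S.mul_mem ha hx) hb)

section IntegralMatrices

variable {n : Type*} [Fintype n] [DecidableEq n]

variable (n) in
abbrev integralMatrices : Subring (Matrix n n ℚ) := (Int.castRingHom ℚ).mapMatrix.range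

variable (n) in
def integralGL : Subgroup (GL n ℚ) := (GeneralLinearGroup.map (Int.castRingHom ℚ)).range

variable (n) in
def principalCongruenceSubgroup (N : ℕ) : Subgroup (GL n ℤ) :=
  (GeneralLinearGroup.map (Int.castRingHom (ZMod N))).ker

instance (N : ℕ) [NeZero N] : (principalCongruenceSubgroup n N).FiniteIndex :=
  finiteIndex_ker _

theorem _root_.Matrix.GeneralLinearGroup.map_intCast_injective :
    Function.Injective (GeneralLinearGroup.map (n := n) (Int.castRingHom ℚ)) :=
  Units.map_injective (Matrix.map_injective Int.cast_injective)

theorem exists_zsmul_mem_integralMatrices (A : Matrix n n ℚ) :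
    ∃ d : ℤ, d ≠ 0 ∧ d • A ∈ integralMatrices n := by
  obtain ⟨⟨d, hd⟩, hA⟩ :=
    IsLocalization.exist_integer_multiples_of_finite (nonZeroDivisors ℤ) fun p : n × n ↦ A p.1 p.2
  choose B hB using hA
  refine ⟨d, nonZeroDivisors.ne_zero hd, Matrix.of fun i j ↦ B (i, j), ?_⟩
  ext i j
  exact hB (i, j)

theorem mem_integralGL_iff {g : GL n ℚ} :
    g ∈ integralGL n ↔ (g : Matrix n n ℚ) ∈ integralMatrices n ∧
      ((g⁻¹ : GL n ℚ) : Matrix n n ℚ) ∈ integralMatrices n := by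
  constructor
  · rintro ⟨g, rfl⟩
    exact ⟨⟨g, rfl⟩, ⟨(g⁻¹ : GL n ℤ), by rw [← GeneralLinearGroup.map_inv]; rfl⟩⟩
  · rintro ⟨⟨A, hA⟩, ⟨B, hB⟩⟩
    have hinj := Matrix.map_injective (m := n) (n := n) (Int.cast_injective (α := ℚ))
    refine ⟨⟨A, B, hinj ?_, hinj ?_⟩, Units.ext hA⟩
    · change (Int.castRingHom ℚ).mapMatrix (A * B) = (Int.castRingHom ℚ).mapMatrix 1
      rw [map_mul, map_one, hA, hB, Units.mul_inv]
    · change (Int.castRingHom ℚ).mapMatrix (B * A) = (Int.castRingHom ℚ).mapMatrix 1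
      rw [map_mul, map_one, hA, hB, Units.inv_mul]

theorem exists_eq_one_add_zsmul_of_mem_principalCongruenceSubgroup {N : ℕ} {g : GL n ℤ}
    (hg : g ∈ principalCongruenceSubgroup n N) :
    ∃ X : Matrix n n ℤ, (g : Matrix n n ℤ) = 1 + (N : ℤ) • X := by
  have hdvd : ∀ i j, (N : ℤ) ∣ (g : Matrix n n ℤ) i j - (1 : Matrix n n ℤ) i j := fun i j ↦ by
    rw [← ZMod.intCast_zmod_eq_zero_iff_dvd, Int.cast_sub, sub_eq_zero]
    have := congrArg (fun h : GL n (ZMod N) ↦ (h : Matrix n n (ZMod N)) i j) hg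
    simpa [Matrix.one_apply, apply_ite (Int.cast : ℤ → ZMod N)] using this
  choose X hX using hdvd
  refine ⟨Matrix.of X, ?_⟩
  ext i j
  simp [← hX]

theorem conj_mem_integralMatrices_of_mem_principalCongruenceSubgroup (s : GL n ℚ) {d : ℤ}
    (hs : d • (s : Matrix n n ℚ) ∈ integralMatrices n)
    (hs' : d • ((s⁻¹ : GL n ℚ) : Matrix n n ℚ) ∈ integralMatrices n) {g : GL n ℤ}
    (hg : g ∈ principalCongruenceSubgroup n (d.natAbs ^ 2)) :
    ((s⁻¹ * GeneralLinearGroup.map (Int.castRingHom ℚ) g * s : GL n ℚ) : Matrix n n ℚ) ∈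
      integralMatrices n := by
  obtain ⟨X, hX⟩ := exists_eq_one_add_zsmul_of_mem_principalCongruenceSubgroup hg
  have hg' : ((GeneralLinearGroup.map (Int.castRingHom ℚ) g : GL n ℚ) : Matrix n n ℚ) =
      1 + d ^ 2 • (Int.castRingHom ℚ).mapMatrix X := by
    change (Int.castRingHom ℚ).mapMatrix (g : Matrix n n ℤ) = _
    rw [hX, map_add, map_one, map_zsmul, Nat.cast_pow, Int.natCast_natAbs, sq_abs]
  rw [Units.val_mul, Units.val_mul, hg']
  exact (integralMatrices n).mul_one_add_sq_zsmul_mul_mem (Units.inv_mul s) hs' hs ⟨X, rfl⟩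

theorem conj_mem_integralGL_of_mem_principalCongruenceSubgroup (s : GL n ℚ) {d : ℤ}
    (hs : d • (s : Matrix n n ℚ) ∈ integralMatrices n)
    (hs' : d • ((s⁻¹ : GL n ℚ) : Matrix n n ℚ) ∈ integralMatrices n) {g : GL n ℤ}
    (hg : g ∈ principalCongruenceSubgroup n (d.natAbs ^ 2)) :
    s⁻¹ * GeneralLinearGroup.map (Int.castRingHom ℚ) g * s ∈ integralGL n := by
  have hinv : (s⁻¹ * GeneralLinearGroup.map (Int.castRingHom ℚ) g * s)⁻¹ =
      s⁻¹ * GeneralLinearGroup.map (Int.castRingHom ℚ) g⁻¹ * s := by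
    simp [mul_assoc, GeneralLinearGroup.map_inv]
  rw [mem_integralGL_iff, hinv]
  exact ⟨conj_mem_integralMatrices_of_mem_principalCongruenceSubgroup s hs hs' hg,
    conj_mem_integralMatrices_of_mem_principalCongruenceSubgroup s hs hs' (inv_mem hg)⟩

theorem relIndex_smul_integralGL_ne_zero (c : ConjAct (GL n ℚ)) :
    (c • integralGL n).relIndex (integralGL n) ≠ 0 := by
  set s := ofConjAct c
  obtain ⟨d₁, hd₁, hs₁⟩ := exists_zsmul_mem_integralMatrices (s : Matrix n n ℚ)
  obtain ⟨d₂, hd₂, hs₂⟩ := exists_zsmul_mem_integralMatrices ((s⁻¹ : GL n ℚ) : Matrix n n ℚ)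
  have hs : (d₁ * d₂) • (s : Matrix n n ℚ) ∈ integralMatrices n := by
    rw [mul_comm, mul_smul]; exact zsmul_mem hs₁ d₂
  have hs' : (d₁ * d₂) • ((s⁻¹ : GL n ℚ) : Matrix n n ℚ) ∈ integralMatrices n := by
    rw [mul_smul]; exact zsmul_mem hs₂ d₁
  have : NeZero ((d₁ * d₂).natAbs ^ 2) := ⟨by simp [hd₁, hd₂]⟩
  have hle : principalCongruenceSubgroup n ((d₁ * d₂).natAbs ^ 2) ≤
      (c • integralGL n).comap (GeneralLinearGroup.map (Int.castRingHom ℚ)) := by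
    intro g hg
    rw [mem_comap, mem_pointwise_smul_iff_inv_smul_mem]
    simpa [ConjAct.smul_def, s] using
      conj_mem_integralGL_of_mem_principalCongruenceSubgroup s hs hs' hg
  rw [integralGL, ← index_comap]
  exact (finiteIndex_of_le hle).index_ne_zero

theorem commensurable_smul_integralGL (c : ConjAct (GL n ℚ)) :
    Commensurable (c • integralGL n) (integralGL n) :=
  Commensurable.of_relIndex_smul_ne_zero relIndex_smul_integralGL_ne_zero c

end IntegralMatrices

section Orthogonal

variable {m : ℕ}

theorem mem_ortho_self_iff {K : Type*} [Field K] {Q : Matrix (Fin m) (Fin m) K}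
    {g : GL (Fin m) K} :
    g ∈ ortho K Q ↔ ∀ x, qeval Q ((g : Matrix (Fin m) (Fin m) K) *ᵥ x) = qeval Q x :=
  Iff.rfl

theorem smul_ortho_eq {K : Type*} [Field K] {F G : Matrix (Fin m) (Fin m) K} (t : GL (Fin m) K)
    (h : ∀ x, qeval F ((t : Matrix (Fin m) (Fin m) K) *ᵥ x) = qeval G x) :
    toConjAct t⁻¹ • ortho K F = ortho K G := by
  ext g
  rw [mem_pointwise_smul_iff_inv_smul_mem, mem_ortho_self_iff, mem_ortho_self_iff]
  have hconj : ∀ y, (((toConjAct t⁻¹)⁻¹ • g : GL (Fin m) K) : Matrix (Fin m) (Fin m) K) *ᵥ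
      ((t : Matrix (Fin m) (Fin m) K) *ᵥ y) = (t : Matrix (Fin m) (Fin m) K) *ᵥ (g *ᵥ y) := by
    intro y
    simp [ConjAct.smul_def, mulVec_mulVec, Matrix.mul_assoc]
  have ht : ∀ x, (t : Matrix (Fin m) (Fin m) K) *ᵥ ((t⁻¹ : GL (Fin m) K) *ᵥ x) = x := by
    intro x
    simp [mulVec_mulVec]
  constructor
  · intro hF y
    rw [← h, ← h, ← hconj, hF]
  · intro hG x
    rw [← ht x, hconj, h, hG, h]

theorem OZ_eq_comap (Q : Matrix (Fin m) (Fin m) ℚ) :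
    OZ Q = (ortho ℚ Q).comap (GeneralLinearGroup.map (Int.castRingHom ℚ)) :=
  rfl

theorem map_OZ_eq (Q : Matrix (Fin m) (Fin m) ℚ) :
    (OZ Q).map (GeneralLinearGroup.map (Int.castRingHom ℚ)) = integralGL (Fin m) ⊓ ortho ℚ Q := by
  rw [OZ_eq_comap, map_comap_eq, integralGL]

end Orthogonal

theorem commensurable_of_rationally_equivalent_general {m : ℕ}
    (F G : Matrix (Fin m) (Fin m) ℚ)
    (T : Matrix (Fin m) (Fin m) ℚ) (hT : T.det ≠ 0)
    (heq : ∀ x : Fin m → ℚ, qeval F (T *ᵥ x) = qeval G x) :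
    AbstractlyCommensurable ↥(OZ F) ↥(OZ G) := by
  set c := toConjAct (GeneralLinearGroup.mkOfDetNeZero T hT)⁻¹
  have hconj : c • (integralGL (Fin m) ⊓ ortho ℚ F) = c • integralGL (Fin m) ⊓ ortho ℚ G := by
    rw [smul_inf, smul_ortho_eq _ heq]
  have hinj := GeneralLinearGroup.map_intCast_injective (n := Fin m)
  let eF : OZ F ≃* ↥(c • integralGL (Fin m) ⊓ ortho ℚ G) :=
    ((OZ F).equivMapOfInjective _ hinj).trans <| (MulEquiv.subgroupCongr (map_OZ_eq F)).trans <|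
      (equivSMul c _).trans (MulEquiv.subgroupCongr hconj)
  let eG : OZ G ≃* ↥(integralGL (Fin m) ⊓ ortho ℚ G) :=
    ((OZ G).equivMapOfInjective _ hinj).trans (MulEquiv.subgroupCongr (map_OZ_eq G))
  exact .of_mulEquiv eF eG <|
    .of_commensurable ((commensurable_smul_integralGL c).inf_right (ortho ℚ G))

/-- Rationally equivalent nonsingular rational quadratic forms have
abstractly commensurable integral orthogonal groups. -/
theorem commensurable_of_rationally_equivalent {m : ℕ}
    (F G : Matrix (Fin m) (Fin m) ℚ) (hFsymm : F.IsSymm) (hGsymm : G.IsSymm)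
    (hFns : F.det ≠ 0) (hGns : G.det ≠ 0)
    (T : Matrix (Fin m) (Fin m) ℚ) (hT : T.det ≠ 0)
    (heq : ∀ x : Fin m → ℚ, qeval F (T *ᵥ x) = qeval G x) :
    AbstractlyCommensurable ↥(OZ F) ↥(OZ G) :=
  commensurable_of_rationally_equivalent_general F G T hT heq

end Paper
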